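/- Let (A,B,l_A,r_A,l_B,r_B) be a matched pair of left-symmetric algebras. Then (G(A), G(B), l_A - r_A, l_B - r_B) is a matched pair of Lie algebras. -/

import Mathlib

/-! Every identity is a linear combination of the hypotheses: the representation property of
`l - r` is the antisymmetrisation of the two bimodule axioms, and equation (2.17) is
`-(3.6) + (3.7)(a, b) - (3.7)(b, a)`. Exchanging the roles of `A` and `B` turns (3.6), (3.7)
into (3.8), (3.9), so the statements about `G(B)` and (2.18) are the same lemmas. -/

section

variable {R : Type*} [CommRing R] {A : Type*} [AddCommGroup A] [Module R A]
  {B : Type*} [AddCommGroup B] [Module R B]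

theorem bimodule_sub_map_commutator (mulA : A →ₗ[R] A →ₗ[R] A) (lA rA : A →ₗ[R] B →ₗ[R] B)
    (hl : ∀ (x y : A) (b : B),
      lA x (lA y b) - lA (mulA x y) b = lA y (lA x b) - lA (mulA y x) b)
    (hlr : ∀ (x y : A) (b : B),
      lA x (rA y b) - rA y (lA x b) = rA (mulA x y) b - rA y (rA x b))
    (x y : A) (b : B) :
    (lA x - rA x) ((lA y - rA y) b) - (lA y - rA y) ((lA x - rA x) b)
      = (lA (mulA x y - mulA y x) - rA (mulA x y - mulA y x)) b := by
  simp only [LinearMap.sub_apply, map_sub]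
  linear_combination (norm := module) hl x y b - hlr x y b + hlr y x b

theorem matchedPair_sub_map_lie_compat (mulB : B →ₗ[R] B →ₗ[R] B)
    (lA rA : A →ₗ[R] B →ₗ[R] B) (lB rB : B →ₗ[R] A →ₗ[R] A)
    (h36 : ∀ (x : A) (a b : B),
      rA x (mulB a b - mulB b a)
      = rA (lB b x) a - rA (lB a x) b + mulB a (rA x b) - mulB b (rA x a))
    (h37 : ∀ (x : A) (a b : B),
      lA x (mulB a b)
      = -lA (lB a x - rB a x) b + mulB (lA x a - rA x a) b
        + rA (rB b x) a + mulB a (lA x b))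
    (x : A) (a b : B) :
    (lA x - rA x) (mulB a b - mulB b a)
      - (mulB ((lA x - rA x) a) b - mulB b ((lA x - rA x) a))
      - (mulB a ((lA x - rA x) b) - mulB ((lA x - rA x) b) a)
      + (lA ((lB a - rB a) x) - rA ((lB a - rB a) x)) b
      - (lA ((lB b - rB b) x) - rA ((lB b - rB b) x)) a = 0 := by
  have e36 := h36 x a b
  have e37 := h37 x a b
  have e37' := h37 x b a
  simp only [LinearMap.sub_apply, map_sub] at e36 e37 e37' ⊢
  linear_combination (norm := module) -e36 + e37 - e37'

end

theorem matched_pair_lie_of_lsym (F : Type*) [Field F]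
    (A : Type*) [AddCommGroup A] [Module F A]
    (B : Type*) [AddCommGroup B] [Module F B]
    (mulA : A →ₗ[F] A →ₗ[F] A) (mulB : B →ₗ[F] B →ₗ[F] B)
    (lA rA : A →ₗ[F] B →ₗ[F] B) (lB rB : B →ₗ[F] A →ₗ[F] A)
    (hbA1 : ∀ (x y : A) (b : B),
      lA x (lA y b) - lA (mulA x y) b = lA y (lA x b) - lA (mulA y x) b)
    (hbA2 : ∀ (x y : A) (b : B),
      lA x (rA y b) - rA y (lA x b) = rA (mulA x y) b - rA y (rA x b))
    (hbB1 : ∀ (a b : B) (x : A),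
      lB a (lB b x) - lB (mulB a b) x = lB b (lB a x) - lB (mulB b a) x)
    (hbB2 : ∀ (a b : B) (x : A),
      lB a (rB b x) - rB b (lB a x) = rB (mulB a b) x - rB b (rB a x))
    (h36 : ∀ (x : A) (a b : B),
      rA x (mulB a b - mulB b a)
      = rA (lB b x) a - rA (lB a x) b + mulB a (rA x b) - mulB b (rA x a))
    (h37 : ∀ (x : A) (a b : B),
      lA x (mulB a b)
      = -lA (lB a x - rB a x) b + mulB (lA x a - rA x a) b
        + rA (rB b x) a + mulB a (lA x b))
    (h38 : ∀ (a : B) (x y : A),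
      rB a (mulA x y - mulA y x)
      = rB (lA y a) x - rB (lA x a) y + mulA x (rB a y) - mulA y (rB a x))
    (h39 : ∀ (a : B) (x y : A),
      lB a (mulA x y)
      = -lB (lA x a - rA x a) y + mulA (lB a x - rB a x) y
        + rB (rA y a) x + mulA x (lB a y)) :
    -- ρ = l_A - r_A is a representation of G(A)
    ((∀ (x y : A) (b : B),
        (lA x - rA x) ((lA y - rA y) b) - (lA y - rA y) ((lA x - rA x) b)
        = (lA (mulA x y - mulA y x) - rA (mulA x y - mulA y x)) b)
    -- μ = l_B - r_B is a representation of G(B)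
    ∧ (∀ (a b : B) (x : A),
        (lB a - rB a) ((lB b - rB b) x) - (lB b - rB b) ((lB a - rB a) x)
        = (lB (mulB a b - mulB b a) - rB (mulB a b - mulB b a)) x)
    -- equation (2.17) for (G(A), G(B), ρ, μ)
    ∧ (∀ (x : A) (a b : B),
        (lA x - rA x) (mulB a b - mulB b a)
          - (mulB ((lA x - rA x) a) b - mulB b ((lA x - rA x) a))
          - (mulB a ((lA x - rA x) b) - mulB ((lA x - rA x) b) a)
          + (lA ((lB a - rB a) x) - rA ((lB a - rB a) x)) b
          - (lA ((lB b - rB b) x) - rA ((lB b - rB b) x)) a = 0)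
    -- equation (2.18) for (G(A), G(B), ρ, μ)
    ∧ (∀ (a : B) (x y : A),
        (lB a - rB a) (mulA x y - mulA y x)
          - (mulA ((lB a - rB a) x) y - mulA y ((lB a - rB a) x))
          - (mulA x ((lB a - rB a) y) - mulA ((lB a - rB a) y) x)
          + (lB ((lA x - rA x) a) - rB ((lA x - rA x) a)) y
          - (lB ((lA y - rA y) a) - rB ((lA y - rA y) a)) x = 0)) :=
  ⟨bimodule_sub_map_commutator mulA lA rA hbA1 hbA2,
    bimodule_sub_map_commutator mulB lB rB hbB1 hbB2,
    matchedPair_sub_map_lie_compat mulB lA rA lB rB h36 h37,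
    matchedPair_sub_map_lie_compat mulA lB rB lA rA h38 h39⟩
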